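/- arXiv:2404.15409 — 2 statements merged into one kernel-verified Lean document; each statement's English description precedes it below -/
import Mathlib

section
/- Let $w, w' \in [0,1]^n$ with $\mathrm{supp}(w') \subseteq \mathrm{supp}(w)$ and $\|w - w'\|_1 \cdot L \le 1/2$. If $w$ is $(L,R)$-good for $(X,y)$, then for all $i \in \mathrm{supp}(w)$, the weighted OLS predictions satisfy $|x_i^\top \beta_w - x_i^\top \beta_{w'}| \le 2\|w - w'\|_1\, L R$. Consequently, $w'$ is $(\eta L, \eta R)$-good for $(X,y)$ with $\eta = 1 + 2L\|w - w'\|_1$. -/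
/-!
Write `A = Xᵀ diag(w) X`, `A' = Xᵀ diag(w') X` and `S = ‖w - w'‖₁`. Cauchy–Schwarz for the
form of `A⁻¹` gives `⟪x_i, v⟫² ≤ L · vᵀAv` for `i ∈ supp w`; as `supp w' ⊆ supp w`, this yields
`A' ⪰ (1 - SL) A ≻ 0`. For `v = A'⁻¹ x_i` the same two inequalities bound the new leverage `ℓ`
by `(1 - SL) ℓ² ≤ L ℓ`, so `ℓ ≤ L / (1 - SL) ≤ (1 + 2SL) L ≤ 2L`, and Cauchy–Schwarz for `A'⁻¹`
bounds the cross terms `|x_iᵀ A'⁻¹ x_j|` by `2L` as well. The normal equations for `β_w` give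
`β_w - β_{w'} = A'⁻¹ ∑_j (w_j - w'_j)(y_j - x_jᵀ β_w) x_j`, and each summand moves a supported
prediction by at most `|w_j - w'_j| · R · 2L`.
-/

open Matrix

/-- The weighted OLS solution `β_w = (Xᵀ diag(w) X)⁻¹ Xᵀ diag(w) y`. -/
noncomputable def weightedOLS {n d : ℕ} (X : Matrix (Fin n) (Fin d) ℝ)
    (y : Fin n → ℝ) (w : Fin n → ℝ) : Fin d → ℝ :=
  (Xᵀ * Matrix.diagonal w * X)⁻¹ *ᵥ (Xᵀ *ᵥ fun i => w i * y i)

section Gram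
variable {m p : Type*} [Fintype m]

lemma dotProduct_mulVec_transpose_mulVec [Fintype p] (M : Matrix p p ℝ) (X : Matrix m p ℝ)
    (u : p → ℝ) (g : m → ℝ) : u ⬝ᵥ M *ᵥ (Xᵀ *ᵥ g) = ∑ j, g j * (u ⬝ᵥ M *ᵥ X j) := by
  rw [dotProduct_mulVec, dotProduct_mulVec, vecMul_transpose, dotProduct_comm]
  exact Finset.sum_congr rfl fun j _ => by rw [dotProduct_mulVec, dotProduct_comm]; rfl

variable [DecidableEq m]

lemma isHermitian_gram (X : Matrix m p ℝ) (c : m → ℝ) : (Xᵀ * diagonal c * X).IsHermitian := by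
  simpa using isHermitian_conjTranspose_mul_mul X (isHermitian_diagonal c)

lemma posSemidef_gram [Fintype p] (X : Matrix m p ℝ) {c : m → ℝ} (hc : ∀ i, 0 ≤ c i) :
    (Xᵀ * diagonal c * X).PosSemidef := by
  simpa using (PosSemidef.diagonal (fun i => hc i)).conjTranspose_mul_mul_same X

lemma gram_mulVec [Fintype p] (X : Matrix m p ℝ) (c : m → ℝ) (v : p → ℝ) :
    (Xᵀ * diagonal c * X) *ᵥ v = Xᵀ *ᵥ fun i => c i * (X i ⬝ᵥ v) := by
  rw [← mulVec_mulVec, ← mulVec_mulVec]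
  congr 1
  ext i
  rw [mulVec_diagonal]
  rfl

lemma dotProduct_gram_mulVec [Fintype p] (X : Matrix m p ℝ) (c : m → ℝ) (v : p → ℝ) :
    v ⬝ᵥ (Xᵀ * diagonal c * X) *ᵥ v = ∑ i, c i * (X i ⬝ᵥ v) ^ 2 := by
  rw [gram_mulVec, dotProduct_mulVec, vecMul_transpose]
  exact Finset.sum_congr rfl fun i _ => show (X i ⬝ᵥ v) * _ = _ by ring

end Gram

namespace Matrix.PosSemidef
variable {p : Type*} [Fintype p]

lemma dotProduct_mulVec_self_nonneg {B : Matrix p p ℝ} (hB : B.PosSemidef) (v : p → ℝ) :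
    0 ≤ v ⬝ᵥ B *ᵥ v := by
  simpa using hB.dotProduct_mulVec_nonneg v

lemma sq_dotProduct_mulVec_le {B : Matrix p p ℝ} (hB : B.PosSemidef) (u v : p → ℝ) :
    (u ⬝ᵥ B *ᵥ v) ^ 2 ≤ (u ⬝ᵥ B *ᵥ u) * (v ⬝ᵥ B *ᵥ v) := by
  classical
  have hsymm : (toBilin' B).IsSymm :=
    isSymm_toBilin'_iff_isSymm.mpr (by simpa using hB.isHermitian)
  simpa only [toBilin'_apply'] using (toBilin' B).apply_sq_le_of_symm
    (fun x => by simpa only [toBilin'_apply'] using hB.dotProduct_mulVec_self_nonneg x)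
    (LinearMap.BilinForm.isSymm_iff.mp hsymm) u v

lemma abs_dotProduct_mulVec_le {B : Matrix p p ℝ} (hB : B.PosSemidef) {u v : p → ℝ} {M : ℝ}
    (hu : u ⬝ᵥ B *ᵥ u ≤ M) (hv : v ⬝ᵥ B *ᵥ v ≤ M) : |u ⬝ᵥ B *ᵥ v| ≤ M := by
  have hu₀ := hB.dotProduct_mulVec_self_nonneg u
  have hv₀ := hB.dotProduct_mulVec_self_nonneg v
  refine abs_le_of_sq_le_sq ((hB.sq_dotProduct_mulVec_le u v).trans ?_) (hu₀.trans hu)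
  rw [sq]
  exact mul_le_mul hu hv hv₀ (hu₀.trans hu)

lemma sq_dotProduct_le_inv_mul [DecidableEq p] {A : Matrix p p ℝ} (hA : A.PosSemidef)
    (hdet : IsUnit A.det) (x v : p → ℝ) :
    (x ⬝ᵥ v) ^ 2 ≤ (x ⬝ᵥ A⁻¹ *ᵥ x) * (v ⬝ᵥ A *ᵥ v) := by
  have hv : A⁻¹ *ᵥ (A *ᵥ v) = v := by rw [mulVec_mulVec, nonsing_inv_mul A hdet, one_mulVec]
  simpa only [hv, dotProduct_comm (A *ᵥ v)] using hA.inv.sq_dotProduct_mulVec_le x (A *ᵥ v)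

end Matrix.PosSemidef

lemma le_one_add_two_mul_mul_of_one_sub_mul_sq_le {s t L : ℝ} (hL : 0 ≤ L) (ht₀ : 0 ≤ t)
    (ht : t ≤ 1 / 2) (h : (1 - t) * s ^ 2 ≤ L * s) : s ≤ (1 + 2 * t) * L := by
  rcases le_or_gt s 0 with hs | hs
  · nlinarith
  · have hsL : (1 - t) * s ≤ L := le_of_mul_le_mul_right (by nlinarith) hs
    nlinarith [mul_nonneg ht₀ (by linarith : 0 ≤ 1 - 2 * t)]

section WeightDecrease
variable {m p : Type*} [Fintype m] [Fintype p] [DecidableEq m] [DecidableEq p]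
  (X : Matrix m p ℝ) {w w' : m → ℝ} {L : ℝ}

lemma nonneg_of_leverage_le (hw : ∀ i, 0 ≤ w i) {i : m}
    (hlev : X i ⬝ᵥ (Xᵀ * diagonal w * X)⁻¹ *ᵥ X i ≤ L) : 0 ≤ L :=
  ((posSemidef_gram X hw).inv.dotProduct_mulVec_self_nonneg (X i)).trans hlev

lemma sq_dotProduct_le_of_leverage_le (hw : ∀ i, 0 ≤ w i)
    (hdet : IsUnit (Xᵀ * diagonal w * X).det) {i : m}
    (hlev : X i ⬝ᵥ (Xᵀ * diagonal w * X)⁻¹ *ᵥ X i ≤ L) (v : p → ℝ) :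
    (X i ⬝ᵥ v) ^ 2 ≤ L * (v ⬝ᵥ (Xᵀ * diagonal w * X) *ᵥ v) :=
  ((posSemidef_gram X hw).sq_dotProduct_le_inv_mul hdet (X i) v).trans <|
    mul_le_mul_of_nonneg_right hlev ((posSemidef_gram X hw).dotProduct_mulVec_self_nonneg v)

lemma one_sub_mul_dotProduct_gram_le (hw : ∀ i, 0 ≤ w i)
    (hdet : IsUnit (Xᵀ * diagonal w * X).det) (hsupp : ∀ i, w' i ≠ 0 → w i ≠ 0)
    (hlev : ∀ i, w i ≠ 0 → X i ⬝ᵥ (Xᵀ * diagonal w * X)⁻¹ *ᵥ X i ≤ L) (v : p → ℝ) :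
    (1 - (∑ i, |w i - w' i|) * L) * (v ⬝ᵥ (Xᵀ * diagonal w * X) *ᵥ v) ≤
      v ⬝ᵥ (Xᵀ * diagonal w' * X) *ᵥ v := by
  set q := v ⬝ᵥ (Xᵀ * diagonal w * X) *ᵥ v
  have hterm : ∀ i, (w i - w' i) * (X i ⬝ᵥ v) ^ 2 ≤ |w i - w' i| * (L * q) := by
    intro i
    by_cases hi : w i = 0
    · simp [hi, not_imp_not.mp (hsupp i) hi]
    · exact (mul_le_mul_of_nonneg_right (le_abs_self _) (sq_nonneg _)).trans <|
        mul_le_mul_of_nonneg_left (sq_dotProduct_le_of_leverage_le X hw hdet (hlev i hi) v)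
          (abs_nonneg _)
  have hdiff : q - v ⬝ᵥ (Xᵀ * diagonal w' * X) *ᵥ v = ∑ i, (w i - w' i) * (X i ⬝ᵥ v) ^ 2 := by
    simp only [q, dotProduct_gram_mulVec, ← Finset.sum_sub_distrib, sub_mul]
  have hsum : ∑ i, (w i - w' i) * (X i ⬝ᵥ v) ^ 2 ≤ (∑ i, |w i - w' i|) * L * q := by
    rw [mul_assoc, Finset.sum_mul]
    exact Finset.sum_le_sum fun i _ => hterm i
  linarith

lemma posDef_gram_of_weight_decrease (hw : ∀ i, 0 ≤ w i)
    (hdet : IsUnit (Xᵀ * diagonal w * X).det) (hsupp : ∀ i, w' i ≠ 0 → w i ≠ 0)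
    (hlev : ∀ i, w i ≠ 0 → X i ⬝ᵥ (Xᵀ * diagonal w * X)⁻¹ *ᵥ X i ≤ L)
    (hclose : (∑ i, |w i - w' i|) * L < 1) : (Xᵀ * diagonal w' * X).PosDef := by
  have hA : (Xᵀ * diagonal w * X).PosDef :=
    (posSemidef_gram X hw).posDef_iff_isUnit.mpr ((isUnit_iff_isUnit_det _).mpr hdet)
  refine .of_dotProduct_mulVec_pos (isHermitian_gram X w') fun v hv => ?_
  have hpos : 0 < v ⬝ᵥ (Xᵀ * diagonal w * X) *ᵥ v := by simpa using hA.dotProduct_mulVec_pos hv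
  have hlow := one_sub_mul_dotProduct_gram_le X hw hdet hsupp hlev v
  simp only [star_trivial]
  nlinarith

lemma leverage_gram_le_of_weight_decrease (hw : ∀ i, 0 ≤ w i)
    (hdet : IsUnit (Xᵀ * diagonal w * X).det) (hsupp : ∀ i, w' i ≠ 0 → w i ≠ 0)
    (hlev : ∀ i, w i ≠ 0 → X i ⬝ᵥ (Xᵀ * diagonal w * X)⁻¹ *ᵥ X i ≤ L)
    (hclose : (∑ i, |w i - w' i|) * L ≤ 1 / 2) {i : m} (hi : w i ≠ 0) :
    X i ⬝ᵥ (Xᵀ * diagonal w' * X)⁻¹ *ᵥ X i ≤ (1 + 2 * L * ∑ i, |w i - w' i|) * L := by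
  set S := ∑ i, |w i - w' i|
  set A' := Xᵀ * diagonal w' * X
  have hdet' : IsUnit A'.det :=
    (posDef_gram_of_weight_decrease X hw hdet hsupp hlev (by linarith)).det_pos.ne'.isUnit
  set u := A'⁻¹ *ᵥ X i
  have hs : X i ⬝ᵥ u = u ⬝ᵥ A' *ᵥ u := by
    rw [mulVec_mulVec, mul_nonsing_inv A' hdet', one_mulVec, dotProduct_comm]
  have hL : 0 ≤ L := nonneg_of_leverage_le X hw (hlev i hi)
  have hlow := one_sub_mul_dotProduct_gram_le X hw hdet hsupp hlev u
  have hsq := sq_dotProduct_le_of_leverage_le X hw hdet (hlev i hi) u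
  have key : (1 - S * L) * (X i ⬝ᵥ u) ^ 2 ≤ L * (X i ⬝ᵥ u) := by
    rw [hs] at hsq ⊢
    nlinarith
  rw [show 2 * L * S = 2 * (S * L) by ring]
  exact le_one_add_two_mul_mul_of_one_sub_mul_sq_le hL
    (mul_nonneg (Finset.sum_nonneg fun _ _ => abs_nonneg _) hL) hclose key

lemma abs_dotProduct_inv_gram_le_of_weight_decrease (hw : ∀ i, 0 ≤ w i)
    (hdet : IsUnit (Xᵀ * diagonal w * X).det) (hsupp : ∀ i, w' i ≠ 0 → w i ≠ 0)
    (hlev : ∀ i, w i ≠ 0 → X i ⬝ᵥ (Xᵀ * diagonal w * X)⁻¹ *ᵥ X i ≤ L)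
    (hclose : (∑ i, |w i - w' i|) * L ≤ 1 / 2) {i j : m} (hi : w i ≠ 0) (hj : w j ≠ 0) :
    |X i ⬝ᵥ (Xᵀ * diagonal w' * X)⁻¹ *ᵥ X j| ≤ 2 * L := by
  have hB := (posDef_gram_of_weight_decrease X hw hdet hsupp hlev (by linarith)).posSemidef.inv
  have hlev' : ∀ k, w k ≠ 0 → X k ⬝ᵥ (Xᵀ * diagonal w' * X)⁻¹ *ᵥ X k ≤ 2 * L := fun k hk =>
    (leverage_gram_le_of_weight_decrease X hw hdet hsupp hlev hclose hk).trans <| by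
      nlinarith [nonneg_of_leverage_le X hw (hlev k hk)]
  exact hB.abs_dotProduct_mulVec_le (hlev' i hi) (hlev' j hj)

end WeightDecrease

section WeightedOLS
variable {n d : ℕ} (X : Matrix (Fin n) (Fin d) ℝ) (y : Fin n → ℝ) {w w' : Fin n → ℝ}

lemma gram_mulVec_weightedOLS (hdet : IsUnit (Xᵀ * diagonal w * X).det) :
    (Xᵀ * diagonal w * X) *ᵥ weightedOLS X y w = Xᵀ *ᵥ fun i => w i * y i := by
  rw [weightedOLS, mulVec_mulVec, mul_nonsing_inv _ hdet, one_mulVec]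

lemma weightedOLS_sub_weightedOLS (hdet : IsUnit (Xᵀ * diagonal w * X).det)
    (hdet' : IsUnit (Xᵀ * diagonal w' * X).det) :
    weightedOLS X y w - weightedOLS X y w' = (Xᵀ * diagonal w' * X)⁻¹ *ᵥ
      Xᵀ *ᵥ fun j => (w j - w' j) * (y j - X j ⬝ᵥ weightedOLS X y w) := by
  set β := weightedOLS X y w
  have hresid : (Xᵀ * diagonal w' * X) *ᵥ β - Xᵀ *ᵥ (fun j => w' j * y j) =
      Xᵀ *ᵥ fun j => (w j - w' j) * (y j - X j ⬝ᵥ β) := calc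
    _ = (Xᵀ * diagonal w' * X) *ᵥ β - Xᵀ *ᵥ (fun j => w' j * y j) -
        ((Xᵀ * diagonal w * X) *ᵥ β - Xᵀ *ᵥ fun j => w j * y j) := by
      rw [gram_mulVec_weightedOLS X y hdet, sub_self, sub_zero]
    _ = _ := by
      simp only [gram_mulVec, ← mulVec_sub]
      congr 1
      ext j
      simp only [Pi.sub_apply]
      ring
  rw [← hresid, mulVec_sub, mulVec_mulVec, nonsing_inv_mul _ hdet', one_mulVec]
  rfl

lemma abs_dotProduct_weightedOLS_sub_le {L R : ℝ} (hw : ∀ i, 0 ≤ w i)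
    (hdet : IsUnit (Xᵀ * diagonal w * X).det) (hsupp : ∀ i, w' i ≠ 0 → w i ≠ 0)
    (hlev : ∀ i, w i ≠ 0 → X i ⬝ᵥ (Xᵀ * diagonal w * X)⁻¹ *ᵥ X i ≤ L)
    (hclose : (∑ i, |w i - w' i|) * L ≤ 1 / 2)
    (hres : ∀ i, w i ≠ 0 → |X i ⬝ᵥ weightedOLS X y w - y i| ≤ R) {i : Fin n} (hi : w i ≠ 0) :
    |X i ⬝ᵥ weightedOLS X y w - X i ⬝ᵥ weightedOLS X y w'| ≤
      2 * (∑ i, |w i - w' i|) * L * R := by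
  have hdet' : IsUnit (Xᵀ * diagonal w' * X).det :=
    (posDef_gram_of_weight_decrease X hw hdet hsupp hlev (by linarith)).det_pos.ne'.isUnit
  rw [← dotProduct_sub, weightedOLS_sub_weightedOLS X y hdet hdet',
    dotProduct_mulVec_transpose_mulVec]
  have hterm : ∀ j, |(w j - w' j) * (y j - X j ⬝ᵥ weightedOLS X y w) *
      (X i ⬝ᵥ (Xᵀ * diagonal w' * X)⁻¹ *ᵥ X j)| ≤ |w j - w' j| * (R * (2 * L)) := by
    intro j
    by_cases hj : w j = 0
    · simp [hj, not_imp_not.mp (hsupp j) hj]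
    · have hres' : |y j - X j ⬝ᵥ weightedOLS X y w| ≤ R := abs_sub_comm (X j ⬝ᵥ _) _ ▸ hres j hj
      rw [abs_mul, abs_mul, mul_assoc]
      exact mul_le_mul_of_nonneg_left (mul_le_mul hres'
        (abs_dotProduct_inv_gram_le_of_weight_decrease X hw hdet hsupp hlev hclose hi hj)
        (abs_nonneg _) ((abs_nonneg _).trans hres')) (abs_nonneg _)
  calc _ ≤ ∑ j, |(w j - w' j) * (y j - X j ⬝ᵥ weightedOLS X y w) *
        (X i ⬝ᵥ (Xᵀ * diagonal w' * X)⁻¹ *ᵥ X j)| := Finset.abs_sum_le_sum_abs _ _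
    _ ≤ ∑ j, |w j - w' j| * (R * (2 * L)) := Finset.sum_le_sum fun j _ => hterm j
    _ = 2 * (∑ i, |w i - w' i|) * L * R := by rw [← Finset.sum_mul]; ring

end WeightedOLS

theorem goodness_after_weight_decrease_general {n d : ℕ} (X : Matrix (Fin n) (Fin d) ℝ)
    (y : Fin n → ℝ) (L R : ℝ) (w w' : Fin n → ℝ)
    (hw : ∀ i, 0 ≤ w i ∧ w i ≤ 1)
    (hsupp : ∀ i, w' i ≠ 0 → w i ≠ 0)
    (hclose : (∑ i, |w i - w' i|) * L ≤ 1 / 2)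
    (hinv : IsUnit (Xᵀ * Matrix.diagonal w * X).det)
    (hlev : ∀ i, w i ≠ 0 → X i ⬝ᵥ ((Xᵀ * Matrix.diagonal w * X)⁻¹ *ᵥ X i) ≤ L)
    (hres : ∀ i, w i ≠ 0 → |X i ⬝ᵥ weightedOLS X y w - y i| ≤ R) :
    (∀ i, w i ≠ 0 →
      |X i ⬝ᵥ weightedOLS X y w - X i ⬝ᵥ weightedOLS X y w'| ≤
        2 * (∑ i, |w i - w' i|) * L * R) ∧
    IsUnit (Xᵀ * Matrix.diagonal w' * X).det ∧
    (∀ i, w' i ≠ 0 →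
      X i ⬝ᵥ ((Xᵀ * Matrix.diagonal w' * X)⁻¹ *ᵥ X i) ≤
        (1 + 2 * L * ∑ i, |w i - w' i|) * L) ∧
    (∀ i, w' i ≠ 0 →
      |X i ⬝ᵥ weightedOLS X y w' - y i| ≤ (1 + 2 * L * ∑ i, |w i - w' i|) * R) := by
  have hw₀ : ∀ i, 0 ≤ w i := fun i => (hw i).1
  have hpred := fun i (hi : w i ≠ 0) =>
    abs_dotProduct_weightedOLS_sub_le X y hw₀ hinv hsupp hlev hclose hres hi
  refine ⟨hpred,
    (posDef_gram_of_weight_decrease X hw₀ hinv hsupp hlev (by linarith)).det_pos.ne'.isUnit,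
    fun i hi => leverage_gram_le_of_weight_decrease X hw₀ hinv hsupp hlev hclose (hsupp i hi),
    fun i hi => ?_⟩
  calc |X i ⬝ᵥ weightedOLS X y w' - y i|
      ≤ |X i ⬝ᵥ weightedOLS X y w - X i ⬝ᵥ weightedOLS X y w'| +
        |X i ⬝ᵥ weightedOLS X y w - y i| := by
        rw [abs_sub_comm (X i ⬝ᵥ weightedOLS X y w)]
        exact abs_sub_le _ _ _
    _ ≤ 2 * (∑ i, |w i - w' i|) * L * R + R :=
        add_le_add (hpred i (hsupp i hi)) (hres i (hsupp i hi))
    _ = (1 + 2 * L * ∑ i, |w i - w' i|) * R := by ring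

/-- Decreasing weight within the support of an `(L,R)`-good vector changes every
supported prediction by at most `2‖w−w'‖₁ L R`; consequently `w'` is
`(ηL, ηR)`-good with `η = 1 + 2L‖w−w'‖₁`. -/
theorem goodness_after_weight_decrease {n d : ℕ} (X : Matrix (Fin n) (Fin d) ℝ)
    (y : Fin n → ℝ) (L R : ℝ) (hL : 0 < L) (hR : 0 < R) (w w' : Fin n → ℝ)
    (hw : ∀ i, 0 ≤ w i ∧ w i ≤ 1) (hw' : ∀ i, 0 ≤ w' i ∧ w' i ≤ 1)
    (hsupp : ∀ i, w' i ≠ 0 → w i ≠ 0)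
    (hclose : (∑ i, |w i - w' i|) * L ≤ 1 / 2)
    (hinv : IsUnit (Xᵀ * Matrix.diagonal w * X).det)
    (hlev : ∀ i, w i ≠ 0 → X i ⬝ᵥ ((Xᵀ * Matrix.diagonal w * X)⁻¹ *ᵥ X i) ≤ L)
    (hres : ∀ i, w i ≠ 0 → |X i ⬝ᵥ weightedOLS X y w - y i| ≤ R) :
    (∀ i, w i ≠ 0 →
      |X i ⬝ᵥ weightedOLS X y w - X i ⬝ᵥ weightedOLS X y w'| ≤
        2 * (∑ i, |w i - w' i|) * L * R) ∧
    IsUnit (Xᵀ * Matrix.diagonal w' * X).det ∧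
    (∀ i, w' i ≠ 0 →
      X i ⬝ᵥ ((Xᵀ * Matrix.diagonal w' * X)⁻¹ *ᵥ X i) ≤
        (1 + 2 * L * ∑ i, |w i - w' i|) * L) ∧
    (∀ i, w' i ≠ 0 →
      |X i ⬝ᵥ weightedOLS X y w' - y i| ≤ (1 + 2 * L * ∑ i, |w i - w' i|) * R) :=
  goodness_after_weight_decrease_general X y L R w w' hw hsupp hclose hinv hlev hres
end

section
/- Let $(X,y)$ be fixed, let $w$ satisfy the leverage-filter guarantee (for all $i \in \mathrm{supp}(w)$, $x_i^\top(X^\top\mathrm{diag}(w)X)^{-1}x_i \le L$ and $\|w\|_1 \ge n - k$), and suppose $kL \le 1/2$. Let $u$ be the output of greedy residual thresholding on $(X,y)$ with threshold $R$ starting from $w$. If $\|u\|_1 \ge n - k$, then $u$ is $(2L, R)$-good for $(X,y)$. -/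
open Matrix

/-- Absolute residual of point `i` under the weighted OLS fit with weights `w`. -/
noncomputable def residW {n d : ℕ} (X : Matrix (Fin n) (Fin d) ℝ)
    (y : Fin n → ℝ) (w : Fin n → ℝ) (i : Fin n) : ℝ :=
  |y i - X i ⬝ᵥ weightedOLS X y w|

/-- Greedy residual thresholding with fuel. -/
noncomputable def residualThresholding {n d : ℕ} (X : Matrix (Fin n) (Fin d) ℝ)
    (y : Fin n → ℝ) (R : ℝ) : ℕ → (Fin n → ℝ) → (Fin n → ℝ)
  | 0, w => w
  | (m + 1), w =>
    let S : Finset (Fin n) := Finset.univ.filter (fun i => w i ≠ 0)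
    let bad : Finset (Fin n) := S.filter (fun i => R < residW X y w i)
    if hbad : bad.Nonempty then
      have hS : S.Nonempty := hbad.mono (Finset.filter_subset _ _)
      let mx : ℝ := S.sup' hS (fun i => residW X y w i)
      let arg : Finset (Fin n) := S.filter (fun i => residW X y w i = mx)
      if harg : arg.Nonempty then
        residualThresholding X y R m (Function.update w (arg.min' harg) 0)
      else w
    else w
/-!
Write `G(t) = Xᵀ diag(t) X`. Cauchy–Schwarz for the inner product `G(w)` turns the leverage
bound into `(xᵢ ⬝ v)² ≤ L · vᵀ G(w) v` for every `i` in the support of `w`. Thresholding only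
zeroes weights, so `G(u) = G(w) - ∑ (wᵢ - uᵢ) xᵢ xᵢᵀ` with removed mass `∑ (wᵢ - uᵢ) ≤ k`
(because `w ≤ 1` and `‖u‖₁ ≥ n - k`). Hence `G(w) ≤ 2 G(u)` in the Loewner order: `G(u)` is
invertible and `G(u)⁻¹ ≤ 2 G(w)⁻¹`, which doubles the leverage bound. The residual bound holds
because the greedy loop, run for as many steps as there are points, can only stop when no point
of the support has residual above `R`.
-/

open Finset

namespace Matrix

variable {ι κ : Type*} [Fintype ι] [DecidableEq ι] [Fintype κ]

abbrev weightedGram (X : Matrix ι κ ℝ) (t : ι → ℝ) : Matrix κ κ ℝ := Xᵀ * diagonal t * X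

lemma dotProduct_weightedGram_mulVec (X : Matrix ι κ ℝ) (t : ι → ℝ) (v : κ → ℝ) :
    v ⬝ᵥ (weightedGram X t *ᵥ v) = ∑ i, t i * (X i ⬝ᵥ v) ^ 2 := by
  rw [← mulVec_mulVec, ← mulVec_mulVec, dotProduct_mulVec, vecMul_transpose, dotProduct]
  refine sum_congr rfl fun i _ => ?_
  rw [mulVec_diagonal]
  simp only [mulVec]
  ring

lemma posSemidef_weightedGram (X : Matrix ι κ ℝ) {t : ι → ℝ} (ht : 0 ≤ t) :
    (weightedGram X t).PosSemidef := by
  simpa [conjTranspose_eq_transpose_of_trivial] using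
    (posSemidef_diagonal_iff.2 ht).conjTranspose_mul_mul_same X

variable {A B : Matrix κ κ ℝ}

lemma PosSemidef.sq_dotProduct_mulVec_le_s16 (hA : A.PosSemidef) (p v : κ → ℝ) :
    (p ⬝ᵥ (A *ᵥ v)) ^ 2 ≤ (p ⬝ᵥ (A *ᵥ p)) * (v ⬝ᵥ (A *ᵥ v)) := by
  have hsymm : v ⬝ᵥ (A *ᵥ p) = p ⬝ᵥ (A *ᵥ v) := by
    rw [dotProduct_mulVec, ← mulVec_transpose, ← conjTranspose_eq_transpose_of_trivial,
      hA.isHermitian.eq, dotProduct_comm]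
  have hdisc := discrim_le_zero (a := v ⬝ᵥ (A *ᵥ v)) (b := 2 * (p ⬝ᵥ (A *ᵥ v)))
    (c := p ⬝ᵥ (A *ᵥ p)) fun x => by
      have := hA.dotProduct_mulVec_nonneg (p + x • v)
      simp only [star_trivial, mulVec_add, mulVec_smul, add_dotProduct, dotProduct_add,
        smul_dotProduct, dotProduct_smul, smul_eq_mul, hsymm] at this
      linarith
  rw [discrim] at hdisc
  linarith

lemma PosDef.of_dotProduct_mulVec_le_smul (hA : A.PosDef) (hB : B.IsHermitian) {c : ℝ}
    (hc : 0 ≤ c) (hAB : ∀ v, v ⬝ᵥ (A *ᵥ v) ≤ c * (v ⬝ᵥ (B *ᵥ v))) : B.PosDef := by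
  refine .of_dotProduct_mulVec_pos hB fun v hv => ?_
  have := hA.dotProduct_mulVec_pos hv
  rw [star_trivial] at this ⊢
  exact pos_of_mul_pos_right (this.trans_le (hAB v)) hc

variable [DecidableEq κ]

lemma PosSemidef.sq_dotProduct_le (hA : A.PosSemidef) (hdet : IsUnit A.det) (x v : κ → ℝ) :
    (x ⬝ᵥ v) ^ 2 ≤ (x ⬝ᵥ (A⁻¹ *ᵥ x)) * (v ⬝ᵥ (A *ᵥ v)) := by
  have hx : A *ᵥ (A⁻¹ *ᵥ x) = x := by rw [mulVec_mulVec, mul_nonsing_inv _ hdet, one_mulVec]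
  have := hA.sq_dotProduct_mulVec_le_s16 (A⁻¹ *ᵥ x) v
  rwa [hx, dotProduct_comm _ x, dotProduct_mulVec, ← mulVec_transpose,
    ← conjTranspose_eq_transpose_of_trivial, hA.isHermitian.eq, hx] at this

lemma PosSemidef.dotProduct_inv_mulVec_le (hA : A.PosSemidef) (hAdet : IsUnit A.det)
    (hBdet : IsUnit B.det) {c : ℝ} (hc : 0 < c)
    (hAB : ∀ v, v ⬝ᵥ (A *ᵥ v) ≤ c * (v ⬝ᵥ (B *ᵥ v))) (x : κ → ℝ) :
    x ⬝ᵥ (B⁻¹ *ᵥ x) ≤ c * (x ⬝ᵥ (A⁻¹ *ᵥ x)) := by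
  set v := B⁻¹ *ᵥ x
  have hBv : x ⬝ᵥ v = v ⬝ᵥ (B *ᵥ v) := by
    rw [mulVec_mulVec, mul_nonsing_inv _ hBdet, one_mulVec, dotProduct_comm]
  have hCS := hA.sq_dotProduct_le hAdet x v
  have hinv : 0 ≤ x ⬝ᵥ (A⁻¹ *ᵥ x) := by simpa using hA.inv.dotProduct_mulVec_nonneg x
  have hAv : 0 ≤ v ⬝ᵥ (A *ᵥ v) := by simpa using hA.dotProduct_mulVec_nonneg v
  have hBq := hAB v
  rw [← hBv] at hBq
  have ht : 0 ≤ x ⬝ᵥ v := nonneg_of_mul_nonneg_right (hAv.trans hBq) hc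
  have : (x ⬝ᵥ v) ^ 2 ≤ c * (x ⬝ᵥ (A⁻¹ *ᵥ x)) * (x ⬝ᵥ v) := by
    nlinarith [mul_le_mul_of_nonneg_left hBq hinv]
  nlinarith [mul_nonneg hc.le hinv]

variable {X : Matrix ι κ ℝ} {w u : ι → ℝ} {L : ℝ}

theorem one_sub_mul_dotProduct_weightedGram_mulVec_le (hw : 0 ≤ w)
    (hdet : IsUnit (weightedGram X w).det)
    (hlev : ∀ i, w i ≠ 0 → X i ⬝ᵥ ((weightedGram X w)⁻¹ *ᵥ X i) ≤ L)
    (hu : 0 ≤ u) (huw : u ≤ w) (v : κ → ℝ) :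
    (1 - L * ∑ i, (w i - u i)) * (v ⬝ᵥ (weightedGram X w *ᵥ v))
      ≤ v ⬝ᵥ (weightedGram X u *ᵥ v) := by
  set q := v ⬝ᵥ (weightedGram X w *ᵥ v) with hq_def
  have hA := posSemidef_weightedGram X hw
  have hq : 0 ≤ q := by simpa using hA.dotProduct_mulVec_nonneg v
  have hterm : ∀ i, (w i - u i) * (X i ⬝ᵥ v) ^ 2 ≤ (w i - u i) * (L * q) := fun i => by
    by_cases hwi : w i = 0
    · have hui : u i = 0 := le_antisymm (hwi ▸ huw i) (hu i)
      simp [hwi, hui]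
    · refine mul_le_mul_of_nonneg_left ?_ (sub_nonneg.2 (huw i))
      exact (hA.sq_dotProduct_le hdet _ v).trans (mul_le_mul_of_nonneg_right (hlev i hwi) hq)
  have hremoved := sum_le_sum fun i (_ : i ∈ univ) => hterm i
  have hsplit : v ⬝ᵥ (weightedGram X u *ᵥ v) = q - ∑ i, (w i - u i) * (X i ⬝ᵥ v) ^ 2 := by
    rw [hq_def, dotProduct_weightedGram_mulVec, dotProduct_weightedGram_mulVec,
      ← sum_sub_distrib]
    exact sum_congr rfl fun i _ => by ring
  rw [← sum_mul] at hremoved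
  rw [hsplit]
  linarith

theorem isUnit_det_weightedGram_and_leverage_le (hw : 0 ≤ w)
    (hdet : IsUnit (weightedGram X w).det)
    (hlev : ∀ i, w i ≠ 0 → X i ⬝ᵥ ((weightedGram X w)⁻¹ *ᵥ X i) ≤ L)
    (hu : 0 ≤ u) (huw : u ≤ w) (hmass : L * ∑ i, (w i - u i) ≤ 1 / 2) :
    IsUnit (weightedGram X u).det ∧
      ∀ i, u i ≠ 0 → X i ⬝ᵥ ((weightedGram X u)⁻¹ *ᵥ X i) ≤ 2 * L := by
  have hA := posSemidef_weightedGram X hw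
  have hAB : ∀ v, v ⬝ᵥ (weightedGram X w *ᵥ v) ≤ 2 * (v ⬝ᵥ (weightedGram X u *ᵥ v)) := by
    intro v
    have hq : 0 ≤ v ⬝ᵥ (weightedGram X w *ᵥ v) := by simpa using hA.dotProduct_mulVec_nonneg v
    nlinarith [one_sub_mul_dotProduct_weightedGram_mulVec_le hw hdet hlev hu huw v]
  have hBpos : (weightedGram X u).PosDef :=
    (hA.posDef_iff_isUnit.2 ((isUnit_iff_isUnit_det _).2 hdet)).of_dotProduct_mulVec_le_smul
      (posSemidef_weightedGram X hu).isHermitian zero_le_two hAB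
  have hBdet : IsUnit (weightedGram X u).det := (isUnit_iff_isUnit_det _).1 hBpos.isUnit
  refine ⟨hBdet, fun i hui => ?_⟩
  have hwi : w i ≠ 0 := fun h => hui (le_antisymm (h ▸ huw i) (hu i))
  calc X i ⬝ᵥ ((weightedGram X u)⁻¹ *ᵥ X i)
      ≤ 2 * (X i ⬝ᵥ ((weightedGram X w)⁻¹ *ᵥ X i)) :=
        hA.dotProduct_inv_mulVec_le hdet hBdet two_pos hAB _
    _ ≤ 2 * L := mul_le_mul_of_nonneg_left (hlev i hwi) zero_le_two

end Matrix

section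
variable {n d : ℕ} (X : Matrix (Fin n) (Fin d) ℝ) (y : Fin n → ℝ) (R : ℝ)

lemma residualThresholding_succ_eq_self_or_update (m : ℕ) (w : Fin n → ℝ) :
    (residualThresholding X y R (m + 1) w = w ∧ ∀ i, w i ≠ 0 → residW X y w i ≤ R) ∨
      ∃ j, w j ≠ 0 ∧ residualThresholding X y R (m + 1) w
        = residualThresholding X y R m (Function.update w j 0) := by
  simp only [residualThresholding]
  split_ifs with hbad harg
  · exact .inr ⟨_, (mem_filter.1 (filter_subset _ _ (min'_mem _ harg))).2, rfl⟩
  · obtain ⟨i, hi, hmax⟩ := exists_mem_eq_sup' (hbad.mono (filter_subset _ _))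
      (fun i => residW X y w i)
    exact absurd ⟨i, mem_filter.2 ⟨hi, hmax.symm⟩⟩ harg
  · exact .inl ⟨rfl, fun i hi => not_lt.1 fun h => hbad ⟨i, by simp [hi, h]⟩⟩

lemma residualThresholding_apply_eq_zero_or_eq (m : ℕ) (w : Fin n → ℝ) (i : Fin n) :
    residualThresholding X y R m w i = 0 ∨ residualThresholding X y R m w i = w i := by
  induction m generalizing w with
  | zero => exact .inr rfl
  | succ m ih =>
    rcases residualThresholding_succ_eq_self_or_update X y R m w with ⟨heq, -⟩ | ⟨j, -, heq⟩
    · exact .inr (by rw [heq])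
    · rw [heq]
      rcases ih (Function.update w j 0) with h | h
      · exact .inl h
      · rw [h, Function.update_apply]
        split_ifs
        exacts [.inl rfl, .inr rfl]

lemma residW_residualThresholding_le {m : ℕ} {w : Fin n → ℝ} (hm : #{i | w i ≠ 0} ≤ m)
    {i : Fin n} (hi : residualThresholding X y R m w i ≠ 0) :
    residW X y (residualThresholding X y R m w) i ≤ R := by
  induction m generalizing w with
  | zero =>
    have hsupp : ({i | w i ≠ 0} : Finset (Fin n)) = ∅ := card_eq_zero.1 (Nat.le_zero.1 hm)
    have hwi : w i = 0 := by simpa using filter_eq_empty_iff.1 hsupp (mem_univ i)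
    exact absurd hwi hi
  | succ m ih =>
    rcases residualThresholding_succ_eq_self_or_update X y R m w with ⟨heq, hres⟩ | ⟨j, hj, heq⟩
    · rw [heq] at hi ⊢
      exact hres i hi
    · rw [heq] at hi ⊢
      refine ih ?_ hi
      have hsupp : ({i | Function.update w j 0 i ≠ 0} : Finset (Fin n))
          = ({i | w i ≠ 0} : Finset (Fin n)).erase j := by
        ext i
        by_cases hij : i = j <;> simp [hij]
      rw [hsupp, card_erase_of_mem (by simpa using hj)]
      omega

end

theorem residualThresholding_returns_good_general {n d : ℕ}
    (X : Matrix (Fin n) (Fin d) ℝ) (y : Fin n → ℝ) (k : ℕ)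
    (L R : ℝ) (hL : 0 < L) (hkL : (k : ℝ) * L ≤ 1 / 2)
    (w : Fin n → ℝ) (hw01 : ∀ i, 0 ≤ w i ∧ w i ≤ 1)
    (hinvw : IsUnit (Xᵀ * Matrix.diagonal w * X).det)
    (hlevw : ∀ i, w i ≠ 0 → X i ⬝ᵥ ((Xᵀ * Matrix.diagonal w * X)⁻¹ *ᵥ X i) ≤ L)
    (hu1 : (n : ℝ) - k ≤ ∑ i, residualThresholding X y R n w i) :
    IsUnit (Xᵀ * Matrix.diagonal (residualThresholding X y R n w) * X).det ∧
    (∀ i, residualThresholding X y R n w i ≠ 0 →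
      X i ⬝ᵥ ((Xᵀ * Matrix.diagonal (residualThresholding X y R n w) * X)⁻¹ *ᵥ X i)
        ≤ 2 * L) ∧
    (∀ i, residualThresholding X y R n w i ≠ 0 →
      |X i ⬝ᵥ weightedOLS X y (residualThresholding X y R n w) - y i| ≤ R) := by
  set u := residualThresholding X y R n w
  have hw : 0 ≤ w := fun i => (hw01 i).1
  have hu : 0 ≤ u ∧ u ≤ w := forall_and.1 fun i => by
    rcases residualThresholding_apply_eq_zero_or_eq X y R n w i with h | h <;>
      simp [u, h, (hw01 i).1]
  have hremoved : ∑ i, (w i - u i) ≤ k := by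
    have : ∑ i, w i ≤ n := by simpa using sum_le_sum fun i (_ : i ∈ univ) => (hw01 i).2
    rw [sum_sub_distrib]
    linarith
  have hmass : L * ∑ i, (w i - u i) ≤ 1 / 2 := by nlinarith
  obtain ⟨hdet, hlev⟩ :=
    Matrix.isUnit_det_weightedGram_and_leverage_le hw hinvw hlevw hu.1 hu.2 hmass
  refine ⟨hdet, hlev, fun i hi => ?_⟩
  rw [abs_sub_comm]
  exact residW_residualThresholding_le X y R ((card_filter_le _ _).trans (by simp)) hi

/-- If the starting weights pass the leverage filter (leverage at most `L` on the
support, total weight at least `n − k`), `kL ≤ 1/2`, and residual thresholding at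
level `R` removes at most `k` total weight, then the returned weights are
`(2L, R)`-good. -/
theorem residualThresholding_returns_good {n d : ℕ}
    (X : Matrix (Fin n) (Fin d) ℝ) (y : Fin n → ℝ) (k : ℕ)
    (L R : ℝ) (hL : 0 < L) (hR : 0 < R) (hkL : (k : ℝ) * L ≤ 1 / 2)
    (w : Fin n → ℝ) (hw01 : ∀ i, 0 ≤ w i ∧ w i ≤ 1)
    (hinvw : IsUnit (Xᵀ * Matrix.diagonal w * X).det)
    (hlevw : ∀ i, w i ≠ 0 → X i ⬝ᵥ ((Xᵀ * Matrix.diagonal w * X)⁻¹ *ᵥ X i) ≤ L)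
    (hw1 : (n : ℝ) - k ≤ ∑ i, w i)
    (hu1 : (n : ℝ) - k ≤ ∑ i, residualThresholding X y R n w i) :
    IsUnit (Xᵀ * Matrix.diagonal (residualThresholding X y R n w) * X).det ∧
    (∀ i, residualThresholding X y R n w i ≠ 0 →
      X i ⬝ᵥ ((Xᵀ * Matrix.diagonal (residualThresholding X y R n w) * X)⁻¹ *ᵥ X i)
        ≤ 2 * L) ∧
    (∀ i, residualThresholding X y R n w i ≠ 0 →
      |X i ⬝ᵥ weightedOLS X y (residualThresholding X y R n w) - y i| ≤ R) :=
  residualThresholding_returns_good_general X y k L R hL hkL w hw01 hinvw hlevw hu1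
end
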